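/- arXiv:2004.02239 — 3 statements merged into one kernel-verified Lean document; each statement's English description precedes it below -/
import Mathlib

section
/- If M is a finitely generated 1-parameter persistence module (a functor from the poset ℕ to finite-dimensional vector spaces over a field F, with finitely many nonzero spaces), then M decomposes as a finite direct sum of interval modules F[a,b], where F[a,b] assigns F to each index in [a,b] with identity maps, and 0 elsewhere. -/
open Function

/-- The direct sum of interval modules `F[a j, b j]`, `j : Fin n`, evaluated at index `i`:
one copy of `F` for each bar `j` whose interval `[a j, b j]` contains `i`. -/
abbrev BarSum (F : Type*) [Field F] (n : ℕ) (a b : Fin n → ℕ) (i : ℕ) : Type _ :=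
  {j : Fin n // a j ≤ i ∧ i ≤ b j} → F

/-- Structure map `i → i+1` of a direct sum of interval modules: identity on the bars
containing both `i` and `i+1`, zero otherwise. -/
def barMap (F : Type*) [Field F] (n : ℕ) (a b : Fin n → ℕ) (i : ℕ) :
    BarSum F n a b i →ₗ[F] BarSum F n a b (i + 1) where
  toFun f j := if h : a j.1 ≤ i ∧ i ≤ b j.1 then f ⟨j.1, h⟩ else 0
  map_add' f g := by funext j; by_cases h : a j.1 ≤ i ∧ i ≤ b j.1 <;> simp [h]
  map_smul' c f := by funext j; by_cases h : a j.1 ≤ i ∧ i ≤ b j.1 <;> simp [h]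

/-- A linear equivalence between two subsingleton modules. -/
def subsingLEquiv (F : Type*) [Field F] (A B : Type*) [AddCommGroup A] [Module F A]
    [AddCommGroup B] [Module F B] [Subsingleton A] [Subsingleton B] : A ≃ₗ[F] B where
  toFun _ := 0
  invFun _ := 0
  map_add' _ _ := by simp
  map_smul' _ _ := by simp
  left_inv _ := Subsingleton.elim _ _
  right_inv _ := Subsingleton.elim _ _

/-- Gaussian elimination with priority-ordered columns: one can replace each column
`G (Pi.single j 1)` of a linear map `G` by a combination `G (v j)` where `v j` is the `j`-th
standard vector corrected by strictly lower-priority coordinates, so that the nonzero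
corrected columns are linearly independent. -/
theorem exists_goodCols (F : Type*) [Field F] {ι β W : Type*} [Fintype ι] [DecidableEq ι]
    [LinearOrder β] [AddCommGroup W] [Module F W] (p : ι → β) (hp : Function.Injective p)
    (G : (ι → F) →ₗ[F] W) (s : Finset ι) :
    ∃ v : ι → ι → F, (∀ j, v j j = 1) ∧
      (∀ j k, k ≠ j → v j k ≠ 0 → j ∈ s ∧ k ∈ s ∧ p k < p j) ∧
      LinearIndependent F (fun q : {j : ι // j ∈ s ∧ G (v j) ≠ 0} => G (v q.1)) := by
  classical
  induction s using Finset.strongInduction with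
  | _ s ih =>
    rcases s.eq_empty_or_nonempty with rfl | hs
    · refine ⟨fun j => Pi.single j 1, fun j => by simp, ?_, ?_⟩
      · intro j k hk hne
        exact absurd (Pi.single_eq_of_ne hk 1) hne
      · haveI : IsEmpty {j : ι // j ∈ (∅ : Finset ι) ∧ G (Pi.single j 1) ≠ 0} :=
          ⟨fun q => by simpa using q.2.1⟩
        exact linearIndependent_empty_type
    · obtain ⟨j₀, hj₀, hmax⟩ := s.exists_max_image p hs
      set s' := s.erase j₀ with hs'
      obtain ⟨v', hd', ht', hli'⟩ := ih s' (Finset.erase_ssubset hj₀)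
      set T := {j : ι // j ∈ s' ∧ G (v' j) ≠ 0}
      set fam : T → W := fun q => G (v' q.1) with hfam
      have hnotmem : j₀ ∉ s' := Finset.notMem_erase _ _
      have hv'j₀ : ∀ j k, k ≠ j → v' j k ≠ 0 → (k ∈ s' ∧ p k < p j₀) := by
        intro j k hk hne
        obtain ⟨hjs, hks, hlt⟩ := ht' j k hk hne
        exact ⟨hks, lt_of_lt_of_le hlt (hmax j (Finset.mem_of_mem_erase hjs))⟩
      by_cases hmem : G (Pi.single j₀ 1) ∈ Submodule.span F (Set.range fam)
      · rw [Submodule.mem_span_range_iff_exists_fun] at hmem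
        obtain ⟨c, hc⟩ := hmem
        set newcol : ι → F := Pi.single j₀ 1 - ∑ q : T, c q • v' q.1 with hnewcol
        set v := Function.update v' j₀ newcol with hv
        have hGnew : G (v j₀) = 0 := by
          simp only [hv, Function.update_self, hnewcol]
          rw [map_sub, map_sum]
          simp only [map_smul]
          rw [hc]  -- might need massaging
          simp
        have hvne : ∀ j, j ≠ j₀ → v j = v' j := fun j hj => Function.update_of_ne hj _ _
        have hsum0 : ∀ k, k ≠ j₀ → (∀ q : T, v' q.1 k ≠ 0 → k ∈ s' ∧ p k < p j₀) := by
          intro k hk q hne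
          obtain ⟨j1, hj1⟩ := q
          rcases eq_or_ne k j1 with rfl | hkq
          · refine ⟨hj1.1, ?_⟩
            have := hmax k (Finset.mem_of_mem_erase hj1.1)
            exact lt_of_le_of_ne this (fun h => hk (hp h))
          · exact hv'j₀ j1 k hkq hne
        refine ⟨v, ?_, ?_, ?_⟩
        · intro j
          rcases eq_or_ne j j₀ with rfl | hj
          · simp only [hv, Function.update_self, hnewcol, Pi.sub_apply, Pi.single_eq_same]
            have : ∀ q : T, (c q • v' q.1) j = 0 := by
              intro q
              have : v' q.1 j = 0 := by
                by_contra hne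
                exact hnotmem (ht' q.1 j (fun h => hnotmem (h ▸ q.2.1)) hne).2.1
              simp [this]
            rw [Finset.sum_apply]
            simp only [this, Finset.sum_const_zero]
            ring
          · rw [hvne j hj]; exact hd' j
        · intro j k hk hne
          rcases eq_or_ne j j₀ with rfl | hj
          · simp only [hv, Function.update_self, hnewcol, Pi.sub_apply] at hne
            rw [Pi.single_eq_of_ne hk, Finset.sum_apply] at hne
            have : ∃ q : T, (c q • v' q.1) k ≠ 0 := by
              by_contra hall
              push_neg at hall
              rw [Finset.sum_eq_zero (fun q _ => hall q)] at hne
              simp at hne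
            obtain ⟨q, hq⟩ := this
            have : v' q.1 k ≠ 0 := fun h => hq (by simp [h])
            obtain ⟨hks, hlt⟩ := hsum0 k hk q this
            exact ⟨hj₀, Finset.mem_of_mem_erase hks, hlt⟩
          · rw [hvne j hj] at hne
            obtain ⟨hjs, hks, hlt⟩ := ht' j k hk hne
            exact ⟨Finset.mem_of_mem_erase hjs, Finset.mem_of_mem_erase hks, hlt⟩
        · have hiff : ∀ j, (j ∈ s ∧ G (v j) ≠ 0) ↔ (j ∈ s' ∧ G (v' j) ≠ 0) := by
            intro j
            constructor
            · rintro ⟨hjs, hne⟩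
              rcases eq_or_ne j j₀ with rfl | hj
              · exact absurd hGnew hne
              · rw [hvne j hj] at hne; exact ⟨Finset.mem_erase.2 ⟨hj, hjs⟩, hne⟩
            · rintro ⟨hjs, hne⟩
              have hj : j ≠ j₀ := fun h => hnotmem (h ▸ hjs)
              rw [← hvne j hj] at hne
              exact ⟨Finset.mem_of_mem_erase hjs, hne⟩
          let E := Equiv.subtypeEquivRight hiff
          have : (fun q : {j : ι // j ∈ s ∧ G (v j) ≠ 0} => G (v q.1)) = fam ∘ E := by
            funext q
            have hj : q.1 ≠ j₀ := fun h => q.2.2 (h ▸ hGnew)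
            exact congrArg G (hvne q.1 hj)
          rw [this]
          exact hli'.comp E E.injective
      · set v := Function.update v' j₀ (Pi.single j₀ 1) with hv
        have hvne : ∀ j, j ≠ j₀ → v j = v' j := fun j hj => Function.update_of_ne hj _ _
        have hvj₀ : v j₀ = Pi.single j₀ 1 := Function.update_self _ _ _
        have hGne : G (v j₀) ≠ 0 := by
          rw [hvj₀]; intro h; exact hmem (h ▸ Submodule.zero_mem _)
        refine ⟨v, ?_, ?_, ?_⟩
        · intro j
          rcases eq_or_ne j j₀ with rfl | hj
          · rw [hvj₀]; simp
          · rw [hvne j hj]; exact hd' j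
        · intro j k hk hne
          rcases eq_or_ne j j₀ with rfl | hj
          · rw [hvj₀, Pi.single_eq_of_ne hk] at hne; exact absurd rfl hne
          · rw [hvne j hj] at hne
            obtain ⟨hjs, hks, hlt⟩ := ht' j k hk hne
            exact ⟨Finset.mem_of_mem_erase hjs, Finset.mem_of_mem_erase hks, hlt⟩
        · -- new index set ≃ Option T
          set U := {j : ι // j ∈ s ∧ G (v j) ≠ 0}
          have hmemU : ∀ j : ι, (j ∈ s ∧ G (v j) ≠ 0) ↔ (j = j₀ ∨ (j ∈ s' ∧ G (v' j) ≠ 0)) := by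
            intro j
            constructor
            · rintro ⟨hjs, hne⟩
              rcases eq_or_ne j j₀ with rfl | hj
              · exact Or.inl rfl
              · rw [hvne j hj] at hne; exact Or.inr ⟨Finset.mem_erase.2 ⟨hj, hjs⟩, hne⟩
            · rintro (rfl | ⟨hjs, hne⟩)
              · exact ⟨hj₀, hGne⟩
              · have hj : j ≠ j₀ := fun h => hnotmem (h ▸ hjs)
                exact ⟨Finset.mem_of_mem_erase hjs, (hvne j hj).symm ▸ hne⟩
          classical
          let E : U ≃ Option T :=
            { toFun := fun q => if h : q.1 = j₀ then none else
                some ⟨q.1, ((hmemU q.1).1 q.2).resolve_left h⟩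
              invFun := fun o => o.elim ⟨j₀, (hmemU j₀).2 (Or.inl rfl)⟩
                (fun t => ⟨t.1, (hmemU t.1).2 (Or.inr t.2)⟩)
              left_inv := by
                rintro ⟨j, hj⟩
                by_cases h : j = j₀ <;> simp [h]
              right_inv := by
                rintro (_ | ⟨t, ht⟩)
                · simp
                · have : t ≠ j₀ := fun h => hnotmem (h ▸ ht.1)
                  simp [this] }
          set w : Option T → W := fun o => o.elim (G (Pi.single j₀ 1)) fam with hw
          have hfac : (fun q : U => G (v q.1)) = w ∘ E := by
            funext q
            obtain ⟨j, hj⟩ := q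
            simp only [comp_apply]
            by_cases h : j = j₀
            · subst h
              simp only [E, Equiv.coe_fn_mk, dif_pos]
              rw [hvj₀]; rfl
            · simp only [E, Equiv.coe_fn_mk, dif_neg h]
              exact congrArg G (hvne j h)
          rw [hfac]
          have hws : w ∘ some = fam := rfl
          have : LinearIndependent F w := by
            rw [linearIndependent_option]
            refine ⟨by rw [hws]; exact hli', ?_⟩
            rw [hws]; exact hmem
          exact this.comp E E.injective

section Vmap
variable {F : Type*} [Field F] {n : ℕ} (a b : Fin n → ℕ) (c : Fin n → Fin n → F)

theorem dsum {α : Type*} [Fintype α] (P : α → Prop) [DecidablePred P]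
    {W : Type*} [AddCommMonoid W] (G : Subtype P → W) :
    ∑ j : Subtype P, G j = ∑ j : α, (if h : P j then G ⟨j, h⟩ else 0) := by
  calc ∑ j : Subtype P, G j
      = ∑ j : Subtype P, (fun j' => if h : P j' then G ⟨j', h⟩ else 0) j.1 := by
        refine Finset.sum_congr rfl fun j _ => ?_
        simp only [dif_pos j.2]
    _ = ∑ j ∈ Finset.univ.filter P, (if h : P j then G ⟨j, h⟩ else 0) :=
        (Finset.sum_subtype (p := P) (Finset.univ.filter P) (fun x => by simp) (fun j => if h : P j then G ⟨j, h⟩ else 0)).symm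
    _ = ∑ j : α, (if h : P j then G ⟨j, h⟩ else 0) :=
        Finset.sum_filter_of_ne (fun x _ h => by by_contra hP; exact h (dif_neg hP))

/-- A "matrix" endomorphism of the bar sum at index `i`. -/
def vmapL (i : ℕ) : BarSum F n a b i →ₗ[F] BarSum F n a b i where
  toFun f k := ∑ j : {j : Fin n // a j ≤ i ∧ i ≤ b j}, c k.1 j.1 * f j
  map_add' f g := by
    funext k
    simp only [Pi.add_apply, mul_add, Finset.sum_add_distrib]
  map_smul' r f := by
    funext k
    simp only [Pi.smul_apply, smul_eq_mul, RingHom.id_apply, Finset.mul_sum]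
    exact Finset.sum_congr rfl fun j _ => by ring

variable (hcd : ∀ j, c j j = 1)
  (hct : ∀ j k, k ≠ j → c k j ≠ 0 → b k = b j ∧ toLex (a k, k) < toLex (a j, j))

include hct in
theorem vmapL_comm (i : ℕ) (f : BarSum F n a b i) :
    barMap F n a b i (vmapL a b c i f) = vmapL a b c (i+1) (barMap F n a b i f) := by
  have hle : ∀ k j : Fin n, k ≠ j → c k j ≠ 0 → a k ≤ a j := by
    intro k j hk hc0
    rcases Prod.Lex.lt_iff.1 (hct j k hk hc0).2 with h | h
    · exact le_of_lt h
    · exact le_of_eq h.1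
  funext k
  obtain ⟨k, hk1, hk2⟩ := k
  simp only [barMap, vmapL, LinearMap.coe_mk, AddHom.coe_mk]
  rw [dsum]
  by_cases hak : a k ≤ i
  · rw [dif_pos ⟨hak, le_trans (Nat.le_succ i) hk2⟩, dsum]
    refine Finset.sum_congr rfl fun j _ => ?_
    by_cases h1 : a j ≤ i ∧ i ≤ b j
    · by_cases h2 : a j ≤ i + 1 ∧ i + 1 ≤ b j
      · rw [dif_pos h1, dif_pos h2, dif_pos h1]
      · -- bar j dies at i : c k j must vanish
        rw [dif_pos h1, dif_neg h2]
        have hbj : b j = i := by omega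
        rcases eq_or_ne k j with heq | hkj
        · subst heq; omega
        · rcases eq_or_ne (c k j) 0 with h0 | h0
          · rw [h0, zero_mul]
          · have := (hct j k hkj h0).1; omega
    · by_cases h2 : a j ≤ i + 1 ∧ i + 1 ≤ b j
      · rw [dif_neg h1, dif_pos h2, dif_neg h1, mul_zero]
      · rw [dif_neg h1, dif_neg h2]
  · rw [dif_neg (fun h => hak h.1)]
    symm
    refine Finset.sum_eq_zero fun j _ => ?_
    by_cases h1 : a j.1 ≤ i ∧ i ≤ b j.1
    · rcases eq_or_ne k j.1 with heq | hkj
      · exact absurd (heq ▸ h1.1) hak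
      · rcases eq_or_ne (c k j.1) 0 with h0 | h0
        · rw [h0, zero_mul]
        · exact absurd ((hle k j.1 hkj h0).trans h1.1) hak
    · rw [dif_neg h1, mul_zero]

include hcd hct in
theorem vmapL_inj (i : ℕ) : Function.Injective (vmapL (F := F) a b c i) := by
  classical
  rw [← LinearMap.ker_eq_bot, LinearMap.ker_eq_bot']
  intro f hf
  by_contra hne
  have : ∃ j, f j ≠ 0 := by
    by_contra hall; push_neg at hall; exact hne (funext hall)
  obtain ⟨j₁, hj₁⟩ := this
  set t := Finset.univ.filter (fun j : {j : Fin n // a j ≤ i ∧ i ≤ b j} => f j ≠ 0) with ht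
  have htne : t.Nonempty := ⟨j₁, by simp [ht, hj₁]⟩
  obtain ⟨j₀, hj₀t, hmax⟩ := t.exists_max_image (fun j => toLex (a j.1, j.1)) htne
  have hfj₀ : f j₀ ≠ 0 := by simpa [ht] using hj₀t
  have := congrFun hf j₀
  rw [show (0 : BarSum F n a b i) j₀ = 0 from rfl] at this
  simp only [vmapL, LinearMap.coe_mk, AddHom.coe_mk] at this
  have hsum : ∑ j : {j : Fin n // a j ≤ i ∧ i ≤ b j}, c j₀.1 j.1 * f j = f j₀ := by
    rw [Finset.sum_eq_single j₀]
    · rw [hcd, one_mul]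
    · intro j _ hjne
      rcases eq_or_ne (f j) 0 with h0 | h0
      · rw [h0, mul_zero]
      · rcases eq_or_ne (c j₀.1 j.1) 0 with hc0 | hc0
        · rw [hc0, zero_mul]
        · have hne1 : j₀.1 ≠ j.1 := fun h => hjne (Subtype.ext h.symm)
          have hlt := (hct j.1 j₀.1 hne1 hc0).2
          have hle' := hmax j (by simp [ht, h0])
          exact absurd (lt_of_lt_of_le hlt hle') (lt_irrefl _)
    · intro h; exact absurd (Finset.mem_univ j₀) h
  rw [hsum] at this
  exact hfj₀ this

noncomputable def vmapEquiv (i : ℕ) (hcd : ∀ j, c j j = 1)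
    (hct : ∀ j k, k ≠ j → c k j ≠ 0 → b k = b j ∧ toLex (a k, k) < toLex (a j, j)) :
    BarSum F n a b i ≃ₗ[F] BarSum F n a b i :=
  LinearEquiv.ofBijective (vmapL a b c i)
    ⟨vmapL_inj a b c hcd hct i, LinearMap.injective_iff_surjective.mp (vmapL_inj a b c hcd hct i)⟩

end Vmap

universe u v

set_option maxHeartbeats 1600000 in
theorem aux_decomp (F : Type v) [Field F] (N : ℕ) :
    ∀ (M : ℕ → Type u) [∀ i, AddCommGroup (M i)] [∀ i, Module F (M i)]
      [∀ i, FiniteDimensional F (M i)] (φ : ∀ i : ℕ, M i →ₗ[F] M (i + 1)),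
      (∀ i, N < i → ∀ x : M i, x = 0) →
      ∃ (n : ℕ) (a b : Fin n → ℕ), (∀ j, a j ≤ b j) ∧
        ∃ e : ∀ i : ℕ, M i ≃ₗ[F] BarSum F n a b i,
          ∀ (i : ℕ) (x : M i), e (i + 1) (φ i x) = barMap F n a b i (e i x) := by
  induction N with
  | zero =>
    intro M _ _ _ φ hfin
    classical
    set n := Module.finrank F (M 0) with hn
    refine ⟨n, fun _ => 0, fun _ => 0, fun _ => le_rfl, ?_⟩
    have hsubM : ∀ i : ℕ, Subsingleton (M (i+1)) := fun i =>
      ⟨fun x y => (hfin (i+1) (by omega) x).trans (hfin (i+1) (by omega) y).symm⟩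
    have hsubB : ∀ i : ℕ, Subsingleton (BarSum F n (fun _ => 0) (fun _ => 0) (i+1)) := by
      intro i
      haveI : IsEmpty {j : Fin n // (0:ℕ) ≤ i + 1 ∧ i + 1 ≤ 0} := ⟨fun q => by omega⟩
      infer_instance
    let ε : {j : Fin n // (0:ℕ) ≤ 0 ∧ (0:ℕ) ≤ 0} ≃ Fin n :=
      Equiv.subtypeUnivEquiv (fun j => ⟨le_rfl, le_rfl⟩)
    let e0 : M 0 ≃ₗ[F] BarSum F n (fun _ => 0) (fun _ => 0) 0 :=
      (Module.finBasis F (M 0)).equivFun.trans (LinearEquiv.funCongrLeft F F ε)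
    refine ⟨fun i => Nat.casesOn i e0 (fun i' => by
      haveI := hsubM i'; haveI := hsubB i'
      exact subsingLEquiv F _ _), ?_⟩
    intro i x
    haveI := hsubB i
    exact Subsingleton.elim _ _
  | succ N ih =>
    intro M _ _ _ φ hfin
    classical
    -- ## truncation at N
    set Msub : ∀ i : ℕ, Submodule F (M i) := fun i => if i ≤ N then ⊤ else ⊥ with hMsub
    set M' : ℕ → Type u := fun i => ↥(Msub i) with hM'
    have hmem : ∀ i (h : i ≤ N) (y : M i), y ∈ Msub i := by
      intro i h y; simp only [Msub, if_pos h]; exact Submodule.mem_top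
    let φ' : ∀ i, M' i →ₗ[F] M' (i+1) := fun i =>
      if h : i + 1 ≤ N then
        ((φ i).comp (Msub i).subtype).codRestrict (Msub (i+1)) (fun x => hmem _ h _)
      else 0
    have hfin' : ∀ i, N < i → ∀ x : M' i, x = 0 := by
      intro i hi x
      have hx : (x : M i) ∈ (if i ≤ N then (⊤ : Submodule F (M i)) else ⊥) := x.2
      rw [if_neg (by omega : ¬ i ≤ N)] at hx
      exact Subtype.ext (by simpa using hx)
    obtain ⟨n, a, b, hab, e', he'⟩ := ih M' φ' hfin'
    -- ## all old bars die by time N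
    have hbN : ∀ j, b j ≤ N := by
      intro j
      by_contra hj
      set y : BarSum F n a b (b j) := Pi.single ⟨j, hab j, le_rfl⟩ 1 with hy
      have hyne : y ≠ 0 := by
        intro h0
        have := congrFun h0 ⟨j, hab j, le_rfl⟩
        rw [hy] at this
        simp at this
      apply hyne
      have h0 : (e' (b j)).symm y = 0 := hfin' (b j) (by omega) _
      have := congrArg (e' (b j)) h0
      simpa using this
    -- ## transfer the truncated decomposition to M itself, for i ≤ N
    let toSub : ∀ i, i ≤ N → (M i ≃ₗ[F] M' i) := fun i h =>
      { toFun := fun x => ⟨x, hmem i h x⟩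
        invFun := Subtype.val
        map_add' := fun _ _ => rfl
        map_smul' := fun _ _ => rfl
        left_inv := fun _ => rfl
        right_inv := fun _ => rfl }
    let E : ∀ i, i ≤ N → (M i ≃ₗ[F] BarSum F n a b i) := fun i h => (toSub i h).trans (e' i)
    have hE : ∀ i (h : i + 1 ≤ N) (x : M i),
        E (i+1) h (φ i x) = barMap F n a b i (E i (by omega) x) := by
      intro i h x
      have h0 := he' i (toSub i (by omega) x)
      have heq : φ' i (toSub i (by omega) x) = toSub (i+1) h (φ i x) := by
        have hφ' : φ' i = ((φ i).comp (Msub i).subtype).codRestrict (Msub (i+1))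
            (fun x => hmem _ h _) := dif_pos h
        rw [hφ']
        exact Subtype.ext rfl
      rw [heq] at h0
      exact h0
    -- ## Gaussian elimination on the map M_N → M_{N+1}
    let G : BarSum F n a b N →ₗ[F] M (N+1) :=
      (φ N).comp ((E N le_rfl).symm : BarSum F n a b N ≃ₗ[F] M N).toLinearMap
    have hpinj : Function.Injective
        (fun q : {j : Fin n // a j ≤ N ∧ N ≤ b j} => toLex (a q.1, q.1)) := by
      intro q r h
      have : ((a q.1, q.1) : ℕ × Fin n) = (a r.1, r.1) := by
        have := congrArg ofLex h; simpa using this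
      exact Subtype.ext (congrArg Prod.snd this)
    obtain ⟨v, hvd, hvt, hvli⟩ := exists_goodCols F
      (fun q : {j : Fin n // a j ≤ N ∧ N ≤ b j} => toLex (a q.1, q.1)) hpinj G Finset.univ
    set Q := {q : {j : Fin n // a j ≤ N ∧ N ≤ b j} // G (v q) ≠ 0} with hQ
    have hvliQ : LinearIndependent F (fun q : Q => G (v q.1)) := by
      let E2 : Q ≃ {j : {j : Fin n // a j ≤ N ∧ N ≤ b j} // j ∈ Finset.univ ∧ G (v j) ≠ 0} :=
        Equiv.subtypeEquivRight (fun j => by simp)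
      exact hvli.comp E2 E2.injective
    -- the triangular change-of-basis matrix
    let c : Fin n → Fin n → F := fun k j =>
      if hj : a j ≤ N ∧ N ≤ b j then
        (if hk : a k ≤ N ∧ N ≤ b k then v ⟨j, hj⟩ ⟨k, hk⟩ else if k = j then 1 else 0)
      else if k = j then 1 else 0
    have hcd : ∀ j, c j j = 1 := by
      intro j
      by_cases hj : a j ≤ N ∧ N ≤ b j
      · simp only [c, dif_pos hj]; exact hvd ⟨j, hj⟩
      · simp [c, hj]
    have hct : ∀ j k, k ≠ j → c k j ≠ 0 →
        b k = b j ∧ toLex (a k, k) < toLex (a j, j) := by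
      intro j k hk hne
      by_cases hj : a j ≤ N ∧ N ≤ b j
      · by_cases hk2 : a k ≤ N ∧ N ≤ b k
        · have hne' : v ⟨j, hj⟩ ⟨k, hk2⟩ ≠ 0 := by
            simpa only [c, dif_pos hj, dif_pos hk2] using hne
          have hkj : (⟨k, hk2⟩ : {j : Fin n // a j ≤ N ∧ N ≤ b j}) ≠ ⟨j, hj⟩ :=
            fun h => hk (congrArg Subtype.val h)
          obtain ⟨-, -, hlt⟩ := hvt ⟨j, hj⟩ ⟨k, hk2⟩ hkj hne'
          refine ⟨?_, hlt⟩
          have := hbN j; have := hbN k; omega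
        · simp only [c, dif_pos hj, dif_neg hk2, if_neg hk] at hne
          exact absurd rfl hne
      · simp only [c, dif_neg hj, if_neg hk] at hne
        exact absurd rfl hne
    let V : ∀ i : ℕ, BarSum F n a b i ≃ₗ[F] BarSum F n a b i := fun i =>
      vmapEquiv a b c i hcd hct
    -- ## new bar data
    set W1 : Submodule F (M (N+1)) :=
      Submodule.span F (Set.range (fun q : Q => G (v q.1))) with hW1
    let BW1 : Module.Basis Q F W1 := Module.Basis.span hvliQ
    obtain ⟨C, hC⟩ := Submodule.exists_isCompl W1
    set d' := Module.finrank F C with hd'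
    let BC : Module.Basis (Fin d') F C := Module.finBasis F C
    set n' := n + d' with hn'
    set ext : Fin n → Prop := fun j => ∃ h : a j ≤ N ∧ N ≤ b j, G (v ⟨j, h⟩) ≠ 0 with hext
    set a' : Fin n' → ℕ := fun j => if h : (j : ℕ) < n then a ⟨j, h⟩ else N+1 with ha'
    set b' : Fin n' → ℕ := fun j =>
      if h : (j : ℕ) < n then (if ext ⟨j, h⟩ then N+1 else b ⟨j, h⟩) else N+1 with hb'
    have ha'lt : ∀ (j : Fin n') (h : (j : ℕ) < n), a' j = a ⟨j, h⟩ := fun j h => dif_pos h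
    have ha'ge : ∀ (j : Fin n'), ¬ ((j : ℕ) < n) → a' j = N + 1 := fun j h => dif_neg h
    have hb'ext : ∀ (j : Fin n') (h : (j : ℕ) < n), ext ⟨j, h⟩ → b' j = N + 1 := by
      intro j h he
      rw [show b' j = if ext ⟨j, h⟩ then N + 1 else b ⟨j, h⟩ from dif_pos h, if_pos he]
    have hab' : ∀ j, a' j ≤ b' j := by
      intro j
      by_cases h : (j : ℕ) < n
      · by_cases he : ext ⟨j, h⟩
        · simp only [a', b', dif_pos h, if_pos he]
          have := hab ⟨j, h⟩; have := hbN ⟨j, h⟩; omega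
        · simp only [a', b', dif_pos h, if_neg he]
          exact hab _
      · simp [a', b', h]
    have hb'le : ∀ j, b' j ≤ N + 1 := by
      intro j
      by_cases h : (j : ℕ) < n
      · by_cases he : ext ⟨j, h⟩
        · simp [b', h, he]
        · simp only [b', dif_pos h, if_neg he]
          have := hbN ⟨j, h⟩; omega
      · simp [b', h]
    -- alive sets agree below level N+1
    have hlow : ∀ i, i ≤ N → ∀ (j : Fin n') (h : (j:ℕ) < n),
        (a' j ≤ i ∧ i ≤ b' j) ↔ (a ⟨j, h⟩ ≤ i ∧ i ≤ b ⟨j, h⟩) := by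
      intro i hi j h
      simp only [a', b', dif_pos h]
      by_cases he : ext ⟨j, h⟩
      · rw [if_pos he]
        obtain ⟨⟨h1, h2⟩, -⟩ := he
        constructor
        · rintro ⟨u1, u2⟩; exact ⟨u1, by omega⟩
        · rintro ⟨u1, u2⟩; exact ⟨u1, by omega⟩
      · rw [if_neg he]
    have hlown : ∀ i, i ≤ N → ∀ (k : {j : Fin n' // a' j ≤ i ∧ i ≤ b' j}), (k.1 : ℕ) < n := by
      intro i hi k
      by_contra h
      have : a' k.1 = N + 1 := by simp [a', h]
      have := k.2.1; omega
    let σ : ∀ i, i ≤ N →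
        ({j : Fin n' // a' j ≤ i ∧ i ≤ b' j} ≃ {j : Fin n // a j ≤ i ∧ i ≤ b j}) := fun i hi =>
      { toFun := fun k => ⟨⟨k.1, hlown i hi k⟩, (hlow i hi k.1 (hlown i hi k)).1 k.2⟩
        invFun := fun j => ⟨Fin.castLE (by omega) j.1, by
          refine (hlow i hi (Fin.castLE (by omega) j.1) j.1.2).2 ?_
          have hfix : (⟨((Fin.castLE (by omega : n ≤ n') j.1 : Fin n') : ℕ), j.1.2⟩ : Fin n)
              = j.1 := Fin.ext (by simp)
          rw [hfix]
          exact j.2⟩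
        left_inv := fun k => Subtype.ext (Fin.ext rfl)
        right_inv := fun j => Subtype.ext (Fin.ext rfl) }
    let R : ∀ i, i ≤ N → (BarSum F n a b i ≃ₗ[F] BarSum F n' a' b' i) := fun i hi =>
      LinearEquiv.funCongrLeft F F (σ i hi)
    -- the equivalence at level N+1
    have hextQ : ∀ (k : Fin n') (h : (k:ℕ) < n), N + 1 ≤ b' k → ext ⟨k, h⟩ := by
      intro k h hbk
      by_contra he
      simp only [b', dif_pos h, if_neg he] at hbk
      have := hbN ⟨k, h⟩; omega
    let τ : {j : Fin n' // a' j ≤ N+1 ∧ N+1 ≤ b' j} ≃ Q ⊕ Fin d' :=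
      { toFun := fun k =>
          if h : (k.1 : ℕ) < n then
            Sum.inl ⟨⟨⟨k.1, h⟩, (hextQ k.1 h k.2.2).choose⟩, (hextQ k.1 h k.2.2).choose_spec⟩
          else Sum.inr ⟨(k.1 : ℕ) - n, by have := k.1.2; simp only [n'] at this; omega⟩
        invFun := fun z => z.elim
          (fun q => ⟨Fin.castLE (by omega) q.1.1, by
            have h : ((Fin.castLE (by omega : n ≤ n') q.1.1 : Fin n') : ℕ) < n := q.1.1.2
            have hfix : (⟨((Fin.castLE (by omega : n ≤ n') q.1.1 : Fin n') : ℕ), h⟩ : Fin n)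
                = q.1.1 := Fin.ext (by simp)
            constructor
            · rw [ha']
              simp only [dif_pos h]
              rw [hfix]
              have := q.1.2.1; omega
            · rw [hb']
              simp only [dif_pos h]
              rw [hfix, if_pos ⟨q.1.2, q.2⟩]⟩)
          (fun r => ⟨⟨n + r.1, by simp only [n']; omega⟩, by
            constructor
            · rw [ha']; simp only [dif_neg (by omega : ¬ n + r.1 < n)]; exact le_rfl
            · rw [hb']; simp only [dif_neg (by omega : ¬ n + r.1 < n)]; exact le_rfl⟩)
        left_inv := by
          rintro ⟨k, hk⟩
          by_cases h : (k : ℕ) < n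
          · simp only [dif_pos h]
            exact Subtype.ext (Fin.ext rfl)
          · simp only [dif_neg h]
            refine Subtype.ext (Fin.ext ?_)
            have := k.2
            simp only [n'] at this
            show n + ((k : ℕ) - n) = (k : ℕ)
            omega
        right_inv := by
          rintro (q | r)
          · have h : ((Fin.castLE (by omega : n ≤ n') q.1.1 : Fin n') : ℕ) < n := q.1.1.2
            simp only [Sum.elim_inl]
            refine (dif_pos h).trans ?_
            congr 1 <;> try exact Subtype.ext (Subtype.ext (Fin.ext rfl))
          · simp only [Sum.elim_inr]
            refine (dif_neg (by omega : ¬ ((n : ℕ) + r.1) < n)).trans ?_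
            congr 1 <;> try exact Fin.ext (by show n + r.1 - n = r.1; omega) }
    let eN1 : M (N+1) ≃ₗ[F] BarSum F n' a' b' (N+1) :=
      (((Submodule.prodEquivOfIsCompl W1 C hC).symm).trans
        ((LinearEquiv.prodCongr BW1.equivFun BC.equivFun).trans
          (((LinearEquiv.sumArrowLequivProdArrow Q (Fin d') F F).symm).trans
            (LinearEquiv.funCongrLeft F F τ))))
    -- subsingleton levels
    have hsubM : ∀ i, N + 2 ≤ i → Subsingleton (M i) := fun i hi =>
      ⟨fun x y => (hfin i (by omega) x).trans (hfin i (by omega) y).symm⟩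
    have hsubB' : ∀ i, N + 2 ≤ i → Subsingleton (BarSum F n' a' b' i) := by
      intro i hi
      haveI : IsEmpty {j : Fin n' // a' j ≤ i ∧ i ≤ b' j} :=
        ⟨fun q => by have := hb'le q.1; have := q.2.2; omega⟩
      infer_instance
    -- ## assemble
    let e : ∀ i : ℕ, M i ≃ₗ[F] BarSum F n' a' b' i := fun i =>
      if h : i ≤ N then ((E i h).trans (V i).symm).trans (R i h)
      else if h2 : i = N + 1 then h2 ▸ eN1
      else by
        haveI := hsubM i (by omega); haveI := hsubB' i (by omega)
        exact subsingLEquiv F _ _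
    refine ⟨n', a', b', hab', e, ?_⟩
    intro i x
    by_cases h1 : i + 1 ≤ N
    · -- low levels
      have hi : i ≤ N := by omega
      have hRcomm : ∀ (w : BarSum F n a b i),
          barMap F n' a' b' i (R i hi w) = R (i+1) h1 (barMap F n a b i w) := by
        intro w
        funext k
        have hkn : (k.1 : ℕ) < n := hlown (i+1) h1 k
        show (if h : a' k.1 ≤ i ∧ i ≤ b' k.1 then (R i hi w) ⟨k.1, h⟩ else 0)
          = (if h : a (σ (i+1) h1 k).1 ≤ i ∧ i ≤ b (σ (i+1) h1 k).1
              then w ⟨(σ (i+1) h1 k).1, h⟩ else 0)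
        by_cases hal : a (σ (i+1) h1 k).1 ≤ i ∧ i ≤ b (σ (i+1) h1 k).1
        · rw [dif_pos hal, dif_pos ((hlow i hi k.1 hkn).2 hal)]
          exact congrArg w (Subtype.ext (Fin.ext rfl))
        · rw [dif_neg hal, dif_neg (fun hc => hal ((hlow i hi k.1 hkn).1 hc))]
      have hVcomm : ∀ (y : BarSum F n a b i),
          (V (i+1)).symm (barMap F n a b i y) = barMap F n a b i ((V i).symm y) := by
        intro y
        rw [LinearEquiv.symm_apply_eq]
        have : (V (i+1)) (barMap F n a b i ((V i).symm y))
            = vmapL a b c (i+1) (barMap F n a b i ((V i).symm y)) := rfl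
        rw [this, ← vmapL_comm a b c hct i ((V i).symm y)]
        congr 1
        exact ((V i).apply_symm_apply y).symm
      have he1 : e (i+1) = ((E (i+1) h1).trans (V (i+1)).symm).trans (R (i+1) h1) := dif_pos h1
      have he2 : e i = ((E i hi).trans (V i).symm).trans (R i hi) := dif_pos hi
      rw [he1, he2]
      show R (i+1) h1 ((V (i+1)).symm (E (i+1) h1 (φ i x)))
        = barMap F n' a' b' i (R i hi ((V i).symm (E i hi x)))
      rw [hE i h1 x, hVcomm, hRcomm]
    · by_cases h2 : i = N
      · subst i
        -- ## the crucial level N → N+1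
        have he1 : e (N+1) = eN1 :=
          Eq.trans (dif_neg (by omega : ¬ N + 1 ≤ N)) (dif_pos rfl)
        have he2 : e N = ((E N le_rfl).trans (V N).symm).trans (R N le_rfl) := dif_pos le_rfl
        rw [he1, he2]
        show eN1 (φ N x) = barMap F n' a' b' N
          (R N le_rfl ((V N).symm (E N le_rfl x)))
        rw [← LinearEquiv.eq_symm_apply]
        set hc : BarSum F n a b N := (V N).symm (E N le_rfl x) with hhc
        set rhs : BarSum F n' a' b' (N+1) := barMap F n' a' b' N (R N le_rfl hc) with hrhs
        -- compute (eN1).symm rhs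
        have step1 : (LinearEquiv.funCongrLeft F F τ).symm rhs
            = Sum.elim (fun q : Q => hc q.1) (fun _ : Fin d' => 0) := by
          funext z
          have : (LinearEquiv.funCongrLeft F F τ).symm rhs z = rhs (τ.symm z) := by
            rw [show (LinearEquiv.funCongrLeft F F τ).symm
                = LinearEquiv.funCongrLeft F F τ.symm from rfl]
            rfl
          rw [this]
          rcases z with q | r
          · -- an extended bar
            show rhs (τ.symm (Sum.inl q)) = hc q.1
            have hkval : ((τ.symm (Sum.inl q)).1 : ℕ) = (q.1.1 : ℕ) := rfl
            have hkn : ((τ.symm (Sum.inl q)).1 : ℕ) < n := by rw [hkval]; exact q.1.1.2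
            have hfix : (⟨((τ.symm (Sum.inl q)).1 : ℕ), hkn⟩ : Fin n) = q.1.1 :=
              Fin.ext hkval
            have halive : a' (τ.symm (Sum.inl q)).1 ≤ N ∧ N ≤ b' (τ.symm (Sum.inl q)).1 := by
              constructor
              · rw [ha'lt _ hkn, hfix]; exact q.1.2.1
              · rw [hb'ext _ hkn (by rw [hfix]; exact ⟨q.1.2, q.2⟩)]; omega
            rw [hrhs]
            show (if h : a' (τ.symm (Sum.inl q)).1 ≤ N ∧ N ≤ b' (τ.symm (Sum.inl q)).1
              then (R N le_rfl hc) ⟨(τ.symm (Sum.inl q)).1, h⟩ else 0) = hc q.1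
            rw [dif_pos halive]
            show hc (σ N le_rfl ⟨(τ.symm (Sum.inl q)).1, halive⟩) = hc q.1
            congr 1 <;> try exact Subtype.ext (Fin.ext hkval)
          · -- a newborn bar
            show rhs (τ.symm (Sum.inr r)) = 0
            have hnot : ¬ (a' (τ.symm (Sum.inr r)).1 ≤ N ∧ N ≤ b' (τ.symm (Sum.inr r)).1) := by
              intro hcon
              have : a' (τ.symm (Sum.inr r)).1 = N + 1 :=
                ha'ge _ (by show ¬ n + (r : ℕ) < n; omega)
              omega
            rw [hrhs]
            show (if h : a' (τ.symm (Sum.inr r)).1 ≤ N ∧ N ≤ b' (τ.symm (Sum.inr r)).1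
              then (R N le_rfl hc) ⟨(τ.symm (Sum.inr r)).1, h⟩ else 0) = 0
            rw [dif_neg hnot]
        -- now the rest of the chain
        have step2 : eN1.symm rhs
            = ↑(∑ q : Q, hc q.1 • BW1 q) := by
          show (Submodule.prodEquivOfIsCompl W1 C hC)
            ((LinearEquiv.prodCongr BW1.equivFun BC.equivFun).symm
              ((LinearEquiv.sumArrowLequivProdArrow Q (Fin d') F F)
                ((LinearEquiv.funCongrLeft F F τ).symm rhs))) = _
          rw [step1]
          have s3 : (LinearEquiv.sumArrowLequivProdArrow Q (Fin d') F F)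
              (Sum.elim (fun q : Q => hc q.1) (fun _ : Fin d' => 0))
              = (fun q : Q => hc q.1, fun _ : Fin d' => (0:F)) := rfl
          rw [s3]
          have s4 : (LinearEquiv.prodCongr BW1.equivFun BC.equivFun).symm
              ((fun q : Q => hc q.1), (fun _ : Fin d' => (0:F)))
              = (BW1.equivFun.symm (fun q => hc q.1), BC.equivFun.symm (fun _ => 0)) := rfl
          rw [s4]
          have s5 : BC.equivFun.symm (fun _ => (0:F)) = 0 := by
            rw [show (fun _ : Fin d' => (0:F)) = (0 : Fin d' → F) from rfl, map_zero]
          rw [s5, Module.Basis.equivFun_symm_apply]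
          show ↑(∑ q : Q, hc q.1 • BW1 q) + ((0 : C) : M (N+1)) = _
          simp
        rw [step2]
        -- finally : φ N x = the span element
        have hEx : E N le_rfl x = vmapL a b c N hc := by
          rw [hhc]
          have := (V N).apply_symm_apply (E N le_rfl x)
          exact this.symm
        have hGE : φ N x = G (E N le_rfl x) := by
          show φ N x = φ N ((E N le_rfl).symm (E N le_rfl x))
          rw [LinearEquiv.symm_apply_apply]
        have hvml : vmapL a b c N hc
            = ∑ j : {j : Fin n // a j ≤ N ∧ N ≤ b j}, hc j • v j := by
          funext k
          show (∑ j : {j : Fin n // a j ≤ N ∧ N ≤ b j}, c k.1 j.1 * hc j)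
            = (∑ j : {j : Fin n // a j ≤ N ∧ N ≤ b j}, hc j • v j) k
          rw [Finset.sum_apply]
          refine Finset.sum_congr rfl fun j _ => ?_
          show c k.1 j.1 * hc j = hc j * v j k
          have : c k.1 j.1 = v j k := by
            simp only [c, dif_pos j.2, dif_pos k.2]
          rw [this, mul_comm]
        rw [hGE, hEx, hvml, map_sum]
        simp only [map_smul]
        have hpush : ((∑ q : Q, hc q.1 • BW1 q : W1) : M (N+1))
            = ∑ q : Q, hc q.1 • (BW1 q : M (N+1)) := by
          push_cast
          rfl
        rw [hpush, dsum (fun q : {j : Fin n // a j ≤ N ∧ N ≤ b j} => G (v q) ≠ 0)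
          (fun q : Q => hc q.1 • (BW1 q : M (N+1)))]
        refine Finset.sum_congr rfl fun j _ => ?_
        by_cases hj : G (v j) ≠ 0
        · rw [dif_pos hj]
          show hc j • G (v j) = ((hc j • BW1 ⟨j, hj⟩ : W1) : M (N+1))
          rw [Submodule.coe_smul, Module.Basis.span_apply]
        · rw [dif_neg hj]
          push_neg at hj
          rw [hj, smul_zero]
      · -- levels above N+1 : the target is a subsingleton
        haveI := hsubB' (i+1) (by omega)
        exact Subsingleton.elim _ _

/-- A finitely generated 1-parameter persistence module (finite-dimensional
spaces, finitely many of them nonzero) over a field `F` is isomorphic, as a persistence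
module, to a finite direct sum of interval modules `F[a j, b j]`. -/
theorem one_parameter_interval_decomposition (F : Type*) [Field F]
    (M : ℕ → Type*) [∀ i, AddCommGroup (M i)] [∀ i, Module F (M i)]
    [∀ i, FiniteDimensional F (M i)]
    (φ : ∀ i : ℕ, M i →ₗ[F] M (i + 1))
    (hfin : ∃ N : ℕ, ∀ i ≥ N, ∀ x : M i, x = 0) :
    ∃ (n : ℕ) (a b : Fin n → ℕ), (∀ j, a j ≤ b j) ∧
      ∃ e : ∀ i : ℕ, M i ≃ₗ[F] BarSum F n a b i,
        ∀ (i : ℕ) (x : M i), e (i + 1) (φ i x) = barMap F n a b i (e i x) := by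
  obtain ⟨N, hN⟩ := hfin
  exact aux_decomp F N M φ (fun i hi x => hN i (by omega) x)
end

section
/- A 1-parameter persistence module M with finite support and finite-dimensional spaces is indecomposable if and only if it is isomorphic to an interval module F[a,b] for some a ≤ b in ℕ. -/
/-- The interval module `F[a,b]` evaluated at `i`: a copy of `F` when `a ≤ i ≤ b`
(encoded as functions from the subsingleton of proofs), and `0` otherwise. -/
abbrev IntervalMod (F : Type*) [Field F] (a b i : ℕ) : Type _ :=
  {_j : Unit // a ≤ i ∧ i ≤ b} → F

/-- Structure map `i → i+1` of the interval module `F[a,b]`: the identity when both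
`i` and `i+1` lie in `[a,b]`, zero otherwise. -/
def intervalMap (F : Type*) [Field F] (a b i : ℕ) :
    IntervalMod F a b i →ₗ[F] IntervalMod F a b (i + 1) where
  toFun f j := if h : a ≤ i ∧ i ≤ b then f ⟨j.1, h⟩ else 0
  map_add' f g := by funext j; by_cases h : a ≤ i ∧ i ≤ b <;> simp [h]
  map_smul' c f := by funext j; by_cases h : a ≤ i ∧ i ≤ b <;> simp [h]

/-- A 1-parameter persistence module is indecomposable: it is nonzero, and for every
internal direct-sum decomposition into two subpersistence modules, one of them is zero. -/
def IsIndecomposablePM (F : Type*) [Field F] (M : ℕ → Type*) [∀ i, AddCommGroup (M i)]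
    [∀ i, Module F (M i)] (φ : ∀ i : ℕ, M i →ₗ[F] M (i + 1)) : Prop :=
  (∃ (i : ℕ) (x : M i), x ≠ 0) ∧
    ∀ (A B : ∀ i : ℕ, Submodule F (M i)),
      (∀ i, IsCompl (A i) (B i)) →
      (∀ i, (A i).map (φ i) ≤ A (i + 1)) →
      (∀ i, (B i).map (φ i) ≤ B (i + 1)) →
      (∀ i, A i = ⊥) ∨ (∀ i, B i = ⊥)

section Helpers
variable {F : Type*} [Field F] {M : ℕ → Type*} [∀ i, AddCommGroup (M i)]
  [∀ i, Module F (M i)] (φ : ∀ i : ℕ, M i →ₗ[F] M (i + 1))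

def pmCast {i j : ℕ} (h : i = j) : M i ≃ₗ[F] M j := h ▸ LinearEquiv.refl F (M i)

def tr (i : ℕ) : (j : ℕ) → M i →ₗ[F] M j
  | 0 => if h : i = 0 then (pmCast h).toLinearMap else 0
  | (j+1) => if h : i = j+1 then (pmCast h).toLinearMap else φ j ∘ₗ tr i j

lemma pmCast_self (h : (i:ℕ) = i) : (pmCast h : M i ≃ₗ[F] M i) = LinearEquiv.refl F (M i) := by
  cases h; rfl

lemma tr_self (i : ℕ) : tr φ i i = LinearMap.id := by
  cases i with
  | zero => simp [tr, pmCast_self]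
  | succ j => simp [tr, pmCast_self]

lemma tr_succ_of_le {i j : ℕ} (h : i ≤ j) : tr φ i (j+1) = φ j ∘ₗ tr φ i j := by
  rw [tr, dif_neg (by omega)]

lemma tr_of_lt {i j : ℕ} (h : j < i) : tr φ i j = 0 := by
  induction j with
  | zero => rw [tr, dif_neg (by omega)]
  | succ k ih =>
      rw [tr, dif_neg (by omega), ih (by omega)]
      ext x; simp

lemma tr_step {i j : ℕ} (h : i < j) : tr φ i j = tr φ (i+1) j ∘ₗ φ i := by
  induction j with
  | zero => omega
  | succ k ih =>
      rcases Nat.lt_or_ge i k with hk | hk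
      · rw [tr_succ_of_le φ (by omega), tr_succ_of_le φ (by omega), ih hk]
        rfl
      · have : i = k := by omega
        subst this
        rw [tr_succ_of_le φ le_rfl, tr_self, tr_self]
        rfl

lemma tr_comp {i j k : ℕ} (h1 : i ≤ j) (h2 : j ≤ k) :
    tr φ j k ∘ₗ tr φ i j = tr φ i k := by
  induction k, h2 using Nat.le_induction with
  | base => rw [tr_self]; rfl
  | succ k hk ih =>
      rw [tr_succ_of_le φ hk, tr_succ_of_le φ (h1.trans hk), LinearMap.comp_assoc, ih]

def trivLEquiv (M₁ N : Type*) [AddCommGroup M₁] [Module F M₁] [AddCommGroup N] [Module F N]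
    [Subsingleton M₁] [Subsingleton N] : M₁ ≃ₗ[F] N where
  toFun _ := 0
  invFun _ := 0
  map_add' _ _ := Subsingleton.elim _ _
  map_smul' _ _ := Subsingleton.elim _ _
  left_inv _ := Subsingleton.elim _ _
  right_inv _ := Subsingleton.elim _ _

noncomputable def spanLEquiv {M₁ : Type*} [AddCommGroup M₁] [Module F M₁] (v : M₁) (hv : v ≠ 0)
    (hspan : Submodule.span F {v} = ⊤) : F ≃ₗ[F] M₁ :=
  LinearEquiv.ofBijective (LinearMap.toSpanSingleton F M₁ v)
    ⟨by intro c d hcd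
        simp only [LinearMap.toSpanSingleton_apply] at hcd
        have h2 := sub_eq_zero.mpr hcd
        rw [← sub_smul] at h2
        rcases smul_eq_zero.mp h2 with h | h
        · exact sub_eq_zero.mp h
        · exact absurd h hv,
     by intro y
        have : y ∈ Submodule.span F {v} := hspan ▸ Submodule.mem_top
        rcases Submodule.mem_span_singleton.mp this with ⟨c, hc⟩
        exact ⟨c, hc⟩⟩

@[simp] lemma spanLEquiv_apply {M₁ : Type*} [AddCommGroup M₁] [Module F M₁] (v : M₁) (hv : v ≠ 0)
    (hspan : Submodule.span F {v} = ⊤) (c : F) : spanLEquiv v hv hspan c = c • v := rfl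

lemma spanLEquiv_symm_smul {M₁ : Type*} [AddCommGroup M₁] [Module F M₁] (v : M₁) (hv : v ≠ 0)
    (hspan : Submodule.span F {v} = ⊤) (c : F) : (spanLEquiv v hv hspan).symm (c • v) = c := by
  rw [LinearEquiv.symm_apply_eq]; simp

@[simp] lemma spanLEquiv_symm_self {M₁ : Type*} [AddCommGroup M₁] [Module F M₁] (v : M₁) (hv : v ≠ 0)
    (hspan : Submodule.span F {v} = ⊤) : (spanLEquiv v hv hspan).symm v = 1 := by
  rw [LinearEquiv.symm_apply_eq]; simp

def intervalUnique {a b i : ℕ} (h : a ≤ i ∧ i ≤ b) : Unique {_j : Unit // a ≤ i ∧ i ≤ b} :=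
  ⟨⟨⟨(), h⟩⟩, fun _ => Subtype.ext (Subsingleton.elim _ _)⟩

lemma intervalSubsingleton (F : Type*) [Field F] {a b i : ℕ} (h : ¬ (a ≤ i ∧ i ≤ b)) :
    Subsingleton (IntervalMod F a b i) :=
  ⟨fun f g => funext fun j => absurd j.2 h⟩

end Helpers

theorem pm_aux_fwd (F : Type*) [Field F]
    (M : ℕ → Type*) [∀ i, AddCommGroup (M i)] [∀ i, Module F (M i)]
    [∀ i, FiniteDimensional F (M i)]
    (φ : ∀ i : ℕ, M i →ₗ[F] M (i + 1))
    (hfin : ∃ N : ℕ, ∀ i ≥ N, ∀ x : M i, x = 0) :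
    IsIndecomposablePM F M φ →
      ∃ a b : ℕ, a ≤ b ∧
        ∃ e : ∀ i : ℕ, M i ≃ₗ[F] IntervalMod F a b i,
          ∀ (i : ℕ) (x : M i), e (i + 1) (φ i x) = intervalMap F a b i (e i x) := by
  classical
  rintro ⟨⟨i0, x0, hx0⟩, hdec⟩
  obtain ⟨N, hN⟩ := hfin
  set P : ℕ → Prop := fun i => ∃ x : M i, x ≠ 0 with hP
  have hi0N : i0 < N := by
    by_contra h
    exact hx0 (hN i0 (by omega) x0)
  set b := Nat.findGreatest P N with hb
  have hPb : P b := Nat.findGreatest_spec (m := i0) (by omega) ⟨x0, hx0⟩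
  have htriv : ∀ i, b < i → ∀ x : M i, x = 0 := by
    intro i hi x
    by_cases hiN : i ≥ N
    · exact hN i hiN x
    · by_contra hx
      exact Nat.findGreatest_is_greatest hi (by omega) ⟨x, hx⟩
  have hbP : ∃ i, ∃ x : M i, tr φ i b x ≠ 0 := by
    obtain ⟨xb, hxb⟩ := hPb
    exact ⟨b, xb, by rw [tr_self]; exact hxb⟩
  set a := Nat.find hbP with ha
  obtain ⟨x, hx⟩ := Nat.find_spec hbP
  have hab : a ≤ b := by
    by_contra h
    rw [tr_of_lt φ (by omega)] at hx
    exact hx rfl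
  have hamin : ∀ i, i < a → ∀ y : M i, tr φ i b y = 0 := by
    intro i hi y
    by_contra hy
    exact Nat.find_min hbP hi ⟨y, hy⟩
  obtain ⟨Bb, hBb⟩ := Submodule.exists_isCompl (Submodule.span F {tr φ a b x})
  set A : ∀ i, Submodule F (M i) := fun i => Submodule.span F {tr φ a i x} with hA
  set B : ∀ i, Submodule F (M i) := fun i => Bb.comap (tr φ i b) with hBdef
  have htrx : ∀ i, a ≤ i → i ≤ b → tr φ i b (tr φ a i x) = tr φ a b x := by
    intro i h1 h2
    exact congrFun (congrArg (fun f => f.toFun) (tr_comp φ h1 h2)) x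
  -- IsCompl
  have hcompl : ∀ i, IsCompl (A i) (B i) := by
    intro i
    by_cases hib : i ≤ b
    · constructor
      · rw [Submodule.disjoint_def]
        intro y hyA hyB
        rcases Submodule.mem_span_singleton.mp hyA with ⟨c, rfl⟩
        by_cases hia : a ≤ i
        · have hmem : c • tr φ a b x ∈ Bb := by
            have := hyB
            simp only [hBdef, Submodule.mem_comap, map_smul] at this
            rwa [htrx i hia hib] at this
          have hmem2 : c • tr φ a b x ∈ Submodule.span F {tr φ a b x} :=
            Submodule.smul_mem _ c (Submodule.mem_span_singleton_self _)
          have h0 : c • tr φ a b x = 0 := by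
            have := hBb.disjoint
            rw [Submodule.disjoint_def] at this
            exact this _ hmem2 hmem
          rcases smul_eq_zero.mp h0 with hc | hc
          · rw [hc, zero_smul]
          · exact absurd hc hx
        · rw [tr_of_lt φ (by omega)]
          simp
      · rw [codisjoint_iff, eq_top_iff]
        intro y _
        by_cases hia : a ≤ i
        · have hy : tr φ i b y ∈ Submodule.span F {tr φ a b x} ⊔ Bb := by
            rw [codisjoint_iff.mp hBb.codisjoint]; trivial
          rcases Submodule.mem_sup.mp hy with ⟨u, hu, w, hw, huw⟩
          rcases Submodule.mem_span_singleton.mp hu with ⟨c, rfl⟩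
          apply Submodule.mem_sup.mpr
          refine ⟨c • tr φ a i x, Submodule.smul_mem _ c (Submodule.mem_span_singleton_self _),
            y - c • tr φ a i x, ?_, by abel⟩
          simp only [hBdef, Submodule.mem_comap, map_sub, map_smul]
          rw [htrx i hia hib, ← huw]
          simpa using hw
        · apply Submodule.mem_sup_right
          simp only [hBdef, Submodule.mem_comap]
          rw [hamin i (by omega) y]
          exact Bb.zero_mem
    · have hAi : A i = ⊥ := by
        show Submodule.span F {tr φ a i x} = ⊥
        have h0 : tr φ a i x = 0 := htriv i (by omega) _
        rw [h0, Submodule.span_zero_singleton]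
      have hBi : B i = ⊤ := by
        show Bb.comap (tr φ i b) = ⊤
        rw [eq_top_iff]
        intro y _
        simp only [Submodule.mem_comap]
        rw [tr_of_lt φ (by omega)]
        simpa using Bb.zero_mem
      rw [hAi, hBi]
      exact isCompl_bot_top
  -- closure
  have hclA : ∀ i, (A i).map (φ i) ≤ A (i + 1) := by
    intro i
    show (Submodule.span F {tr φ a i x}).map (φ i) ≤ Submodule.span F {tr φ a (i+1) x}
    rw [Submodule.map_span, Submodule.span_le]
    rintro _ ⟨y, hy, rfl⟩
    rcases Set.mem_singleton_iff.mp hy with rfl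
    by_cases hia : a ≤ i
    · rw [SetLike.mem_coe]
      have : tr φ a (i+1) x = φ i (tr φ a i x) := by
        rw [tr_succ_of_le φ hia]; rfl
      rw [← this]
      exact Submodule.mem_span_singleton_self _
    · rw [tr_of_lt φ (show i < a by omega)]
      simp
  have hclB : ∀ i, (B i).map (φ i) ≤ B (i + 1) := by
    intro i
    rintro _ ⟨y, hy, rfl⟩
    simp only [hBdef, Submodule.mem_comap] at hy ⊢
    by_cases hib : i < b
    · have : tr φ i b y = tr φ (i+1) b (φ i y) := by
        rw [tr_step φ hib]; rfl
      rwa [← this]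
    · rw [tr_of_lt φ (by omega)]
      simpa using Bb.zero_mem
  -- apply indecomposability
  rcases hdec A B hcompl hclA hclB with hAbot | hBbot
  · exfalso
    have := hAbot b
    rw [hA, Submodule.span_singleton_eq_bot] at this
    exact hx this
  have hAtop : ∀ i, A i = ⊤ := by
    intro i
    have h1 := (hcompl i).codisjoint
    rw [hBbot i, codisjoint_bot] at h1
    exact h1
  have hspan : ∀ i, Submodule.span F {tr φ a i x} = ⊤ := hAtop
  have hvne : ∀ i, a ≤ i → i ≤ b → tr φ a i x ≠ 0 := by
    intro i h1 h2 h0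
    apply hx
    rw [← htrx i h1 h2, h0, map_zero]
  have hsub : ∀ i, ¬ (a ≤ i ∧ i ≤ b) → Subsingleton (M i) := by
    intro i h
    constructor
    intro y z
    have h0 : tr φ a i x = 0 := by
      rcases Nat.lt_or_ge i a with hia | hia
      · rw [tr_of_lt φ hia]; rfl
      · exact htriv i (by omega) _
    have hbt : (⊤ : Submodule F (M i)) = ⊥ := by
      rw [← hspan i, h0, Submodule.span_zero_singleton]
    have hy : y = 0 := by
      have : y ∈ (⊥ : Submodule F (M i)) := hbt ▸ Submodule.mem_top
      simpa using this
    have hz : z = 0 := by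
      have : z ∈ (⊥ : Submodule F (M i)) := hbt ▸ Submodule.mem_top
      simpa using this
    rw [hy, hz]
  refine ⟨a, b, hab, fun i =>
    if h : a ≤ i ∧ i ≤ b then
      letI := intervalUnique (a := a) (b := b) (i := i) h
      ((spanLEquiv (tr φ a i x) (hvne i h.1 h.2) (hspan i)).symm.trans
        (LinearEquiv.funUnique {_j : Unit // a ≤ i ∧ i ≤ b} F F).symm)
    else
      letI := hsub i h
      letI := intervalSubsingleton F h
      trivLEquiv (M i) (IntervalMod F a b i), ?_⟩
  intro i y
  by_cases h1 : a ≤ i + 1 ∧ i + 1 ≤ b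
  · by_cases h0 : a ≤ i
    · have h : a ≤ i ∧ i ≤ b := ⟨h0, by omega⟩
      simp only [dif_pos h, dif_pos h1]
      have hy : y ∈ Submodule.span F {tr φ a i x} := (hspan i) ▸ Submodule.mem_top
      rcases Submodule.mem_span_singleton.mp hy with ⟨c, rfl⟩
      have hφv : φ i (tr φ a i x) = tr φ a (i+1) x := by
        rw [tr_succ_of_le φ h0]; rfl
      funext j
      simp only [LinearEquiv.trans_apply, map_smul, hφv,
        spanLEquiv_symm_smul]
      letI := intervalUnique (a := a) (b := b) (i := i) h
      letI := intervalUnique (a := a) (b := b) (i := i+1) h1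
      simp only [intervalMap, LinearMap.coe_mk, AddHom.coe_mk, dif_pos h]
      simp [LinearEquiv.funUnique, spanLEquiv_symm_self]
    · have : Subsingleton (M i) := hsub i (by omega)
      have hy : y = 0 := Subsingleton.elim y 0
      rw [hy]
      simp
  · letI := intervalSubsingleton F (a := a) (b := b) (i := i+1) h1
    exact Subsingleton.elim _ _

theorem pm_aux_bwd (F : Type*) [Field F]
    (M : ℕ → Type*) [∀ i, AddCommGroup (M i)] [∀ i, Module F (M i)]
    (φ : ∀ i : ℕ, M i →ₗ[F] M (i + 1)) :
    (∃ a b : ℕ, a ≤ b ∧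
        ∃ e : ∀ i : ℕ, M i ≃ₗ[F] IntervalMod F a b i,
          ∀ (i : ℕ) (x : M i), e (i + 1) (φ i x) = intervalMap F a b i (e i x)) →
    IsIndecomposablePM F M φ := by
  classical
  rintro ⟨a, b, hab, e, he⟩
  have hsub : ∀ i, ¬ (a ≤ i ∧ i ≤ b) → ∀ y : M i, y = 0 := by
    intro i h y
    have : Subsingleton (IntervalMod F a b i) := intervalSubsingleton F h
    apply (e i).injective
    exact Subsingleton.elim _ _
  have hbotout : ∀ i, ¬ (a ≤ i ∧ i ≤ b) → ∀ S : Submodule F (M i), S = ⊥ := by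
    intro i h S
    rw [eq_bot_iff]
    intro y _
    rw [hsub i h y]
    exact Submodule.zero_mem _
  -- canonical generators
  set v : ∀ i, M i := fun i => (e i).symm (fun _ => 1) with hv
  have hev : ∀ i (h : a ≤ i ∧ i ≤ b), e i (v i) = fun _ => 1 := fun i h => (e i).apply_symm_apply _
  have hvne : ∀ i, a ≤ i ∧ i ≤ b → v i ≠ 0 := by
    intro i h h0
    have h1 : e i (v i) = 0 := by rw [h0, map_zero]
    rw [hev i h] at h1
    have := congrFun h1 ⟨(), h⟩
    exact one_ne_zero this
  have hscal : ∀ i (h : a ≤ i ∧ i ≤ b) (y : M i), y = (e i y ⟨(), h⟩) • v i := by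
    intro i h y
    apply (e i).injective
    rw [map_smul, hev i h]
    funext j
    have hj : j = ⟨(), h⟩ := Subtype.ext (Subsingleton.elim _ _)
    rw [hj]
    simp
  have hφv : ∀ i, a ≤ i → i + 1 ≤ b → φ i (v i) ≠ 0 := by
    intro i hi hib h0
    have h1 : e (i+1) (φ i (v i)) = intervalMap F a b i (e i (v i)) := he i (v i)
    rw [h0, map_zero, hev i ⟨hi, by omega⟩] at h1
    have h2 := congrFun h1.symm ⟨(), ⟨by omega, hib⟩⟩
    rw [show ((0 : IntervalMod F a b (i+1)) ⟨(), ⟨by omega, hib⟩⟩) = 0 from rfl] at h2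
    have : (intervalMap F a b i fun _ => (1:F)) ⟨(), ⟨by omega, hib⟩⟩ = 1 := by
      simp [intervalMap, dif_pos (show a ≤ i ∧ i ≤ b from ⟨hi, by omega⟩)]
    rw [this] at h2
    exact one_ne_zero h2
  constructor
  · exact ⟨a, v a, hvne a ⟨le_rfl, hab⟩⟩
  intro A B hc hA hB
  have hdich : ∀ i, (a ≤ i ∧ i ≤ b) → A i = ⊥ ∨ B i = ⊥ := by
    intro i h
    by_contra hcon
    push_neg at hcon
    obtain ⟨hA0, hB0⟩ := hcon
    obtain ⟨u, huA, hu0⟩ := Submodule.exists_mem_ne_zero_of_ne_bot hA0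
    obtain ⟨w, hwB, hw0⟩ := Submodule.exists_mem_ne_zero_of_ne_bot hB0
    set cu := e i u ⟨(), h⟩ with hcu
    set cw := e i w ⟨(), h⟩ with hcw
    have hu : u = cu • v i := hscal i h u
    have hw : w = cw • v i := hscal i h w
    have hcu0 : cu ≠ 0 := by
      intro h0; apply hu0; rw [hu, h0, zero_smul]
    have hcw0 : cw ≠ 0 := by
      intro h0; apply hw0; rw [hw, h0, zero_smul]
    have hvA : v i ∈ A i := by
      have : cu⁻¹ • u ∈ A i := Submodule.smul_mem _ _ huA
      rwa [hu, smul_smul, inv_mul_cancel₀ hcu0, one_smul] at this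
    have hvB : v i ∈ B i := by
      have : cw⁻¹ • w ∈ B i := Submodule.smul_mem _ _ hwB
      rwa [hw, smul_smul, inv_mul_cancel₀ hcw0, one_smul] at this
    have : v i = 0 := by
      have hd := (hc i).disjoint
      rw [Submodule.disjoint_def] at hd
      exact hd _ hvA hvB
    exact hvne i h this
  by_cases hAa : A a = ⊥
  · left
    intro i
    by_cases h : a ≤ i ∧ i ≤ b
    · have key : ∀ k, a + k ≤ b → A (a + k) = ⊥ := by
        intro k
        induction k with
        | zero => intro _; simpa using hAa
        | succ k ih =>
          intro hk
          have hAk : A (a + k) = ⊥ := ih (by omega)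
          by_contra hne
          have hB1 : B (a + k + 1) = ⊥ :=
            (hdich (a + k + 1) ⟨by omega, by omega⟩).resolve_left hne
          have hBtop : B (a + k) = ⊤ := by
            have h2 := (hc (a + k)).codisjoint
            rw [hAk] at h2
            have := h2.symm
            rwa [codisjoint_bot] at this
          have hmem : φ (a + k) (v (a + k)) ∈ B (a + k + 1) := by
            apply hB (a + k)
            exact ⟨v (a + k), by rw [hBtop]; trivial, rfl⟩
          rw [hB1] at hmem
          exact hφv (a + k) (by omega) (by omega) (by simpa using hmem)
      have h2 := key (i - a) (by omega)
      have h3 : a + (i - a) = i := by omega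
      rw [h3] at h2
      exact h2
    · exact hbotout i h (A i)
  · right
    have hBa : B a = ⊥ := (hdich a ⟨le_rfl, hab⟩).resolve_left hAa
    intro i
    by_cases h : a ≤ i ∧ i ≤ b
    · have key : ∀ k, a + k ≤ b → B (a + k) = ⊥ := by
        intro k
        induction k with
        | zero => intro _; simpa using hBa
        | succ k ih =>
          intro hk
          have hBk : B (a + k) = ⊥ := ih (by omega)
          by_contra hne
          have hA1 : A (a + k + 1) = ⊥ :=
            (hdich (a + k + 1) ⟨by omega, by omega⟩).resolve_right hne
          have hAtop : A (a + k) = ⊤ := by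
            have h2 := (hc (a + k)).codisjoint
            rw [hBk, codisjoint_bot] at h2
            exact h2
          have hmem : φ (a + k) (v (a + k)) ∈ A (a + k + 1) := by
            apply hA (a + k)
            exact ⟨v (a + k), by rw [hAtop]; trivial, rfl⟩
          rw [hA1] at hmem
          exact hφv (a + k) (by omega) (by omega) (by simpa using hmem)
      have h2 := key (i - a) (by omega)
      have h3 : a + (i - a) = i := by omega
      rw [h3] at h2
      exact h2
    · exact hbotout i h (B i)

/-- A 1-parameter persistence module with finite support and
finite-dimensional graded pieces is indecomposable iff it is isomorphic (as a persistence
module) to an interval module `F[a,b]` for some `a ≤ b`. -/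
theorem one_parameter_indecomposable_iff_interval (F : Type*) [Field F]
    (M : ℕ → Type*) [∀ i, AddCommGroup (M i)] [∀ i, Module F (M i)]
    [∀ i, FiniteDimensional F (M i)]
    (φ : ∀ i : ℕ, M i →ₗ[F] M (i + 1))
    (hfin : ∃ N : ℕ, ∀ i ≥ N, ∀ x : M i, x = 0) :
    IsIndecomposablePM F M φ ↔
      ∃ a b : ℕ, a ≤ b ∧
        ∃ e : ∀ i : ℕ, M i ≃ₗ[F] IntervalMod F a b i,
          ∀ (i : ℕ) (x : M i), e (i + 1) (φ i x) = intervalMap F a b i (e i x) := by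
  constructor
  · exact pm_aux_fwd F M φ hfin
  · exact pm_aux_bwd F M φ
end

section
/- Let F be a finitely generated free 2-parameter persistence module and K a submodule of F (i.e., K_α ≤ F_α for all α, with structure maps the restrictions of those of F). Then for every α ∈ ℕ², the intersection φ_{α+e₁}^{α+e₁+e₂}(K_{α+e₁}) ∩ φ_{α+e₂}^{α+e₁+e₂}(K_{α+e₂}), taken inside F_{α+e₁+e₂}, is contained in φ_α^{α+e₁+e₂}(F_α). -/
/-- The free 2-parameter persistence module on a finite (multi)set of generators,
indexed by `ι` with degrees `deg`: at grade `α` it is the direct sum of one copy of `F`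
for each generator `i` with `deg i ≤ α` (product order on `ℕ × ℕ`). -/
abbrev FreeMod (F : Type*) [Field F] (ι : Type*) (deg : ι → ℕ × ℕ) (α : ℕ × ℕ) : Type _ :=
  {i : ι // deg i ≤ α} → F

/-- Structure map of the free module: identity on each summand present at the source,
new summands get `0`. -/
def freeMap (F : Type*) [Field F] (ι : Type*) (deg : ι → ℕ × ℕ) (α β : ℕ × ℕ)
    (_h : α ≤ β) : FreeMod F ι deg α →ₗ[F] FreeMod F ι deg β where
  toFun f i := if h' : deg i.1 ≤ α then f ⟨i.1, h'⟩ else 0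
  map_add' f g := by funext i; by_cases h' : deg i.1 ≤ α <;> simp [h']
  map_smul' c f := by funext i; by_cases h' : deg i.1 ≤ α <;> simp [h']

/-- **Lemma 1.1 of the paper.** If `K` is a submodule of a finitely generated
free 2-parameter persistence module `F`, then inside `F_{α+e₁+e₂}` the intersection
`φ_{α+e₁}^{α+e₁+e₂}(K_{α+e₁}) ∩ φ_{α+e₂}^{α+e₁+e₂}(K_{α+e₂})` is contained in
`φ_α^{α+e₁+e₂}(F_α)`. -/
theorem intersection_in_lower_free (F : Type*) [Field F] (ι : Type*) [Fintype ι]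
    (deg : ι → ℕ × ℕ)
    (K : ∀ α : ℕ × ℕ, Submodule F (FreeMod F ι deg α))
    (hK : ∀ (α β : ℕ × ℕ) (h : α ≤ β), (K α).map (freeMap F ι deg α β h) ≤ K β)
    (α : ℕ × ℕ) :
    (K (α + (1, 0))).map
        (freeMap F ι deg (α + (1, 0)) (α + (1, 1)) (by simp [Prod.le_def])) ⊓
      (K (α + (0, 1))).map
        (freeMap F ι deg (α + (0, 1)) (α + (1, 1)) (by simp [Prod.le_def])) ≤
    LinearMap.range (freeMap F ι deg α (α + (1, 1)) (by simp [Prod.le_def])) := by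
  rintro x ⟨⟨f, -, rfl⟩, ⟨g, -, hg⟩⟩
  refine ⟨fun i => if h' : deg i.1 ≤ α + (1, 0) then f ⟨i.1, h'⟩ else 0, ?_⟩
  funext i
  simp only [freeMap, LinearMap.coe_mk, AddHom.coe_mk]
  by_cases h1 : deg i.1 ≤ α
  · have h2 : deg i.1 ≤ α + (1, 0) := le_trans h1 (by simp [Prod.le_def])
    simp [h1, h2]
  · simp only [h1, dif_neg, not_false_iff]
    by_cases h2 : deg i.1 ≤ α + (1, 0)
    · -- then since x i = g-image too, deg i ≤ α + (0,1) fails or gives contradiction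
      have h3 : ¬ deg i.1 ≤ α + (0, 1) := by
        intro h3
        exact h1 ⟨by simpa using h3.1, by simpa using h2.2⟩
      have := congrFun hg i
      simp only [freeMap, LinearMap.coe_mk, AddHom.coe_mk, h3, dif_neg, not_false_iff] at this
      rw [dif_pos h2] at this
      simp [h2, ← this]
    · simp [h2]
end
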